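/- Theorem 1 (propagation of subproblem lower bounds): let ((λ_t, ρ_t)_{t=0}^T, (μ_t, ν̲_t, ν̄_t, σ_t)_{t=0}^{T−1}) be dual feasible with dual objective d₀ for data (x₀, (v̲_t), (v̄_t)). Let u₀ ∈ ℝ^p and e₀ ∈ ℝ^n be arbitrary, set x₁ := A x₀ + B u₀ + e₀, and define π₁ := −|Q x₀|² − |R u₀|², π₂ := |ρ₀/2 − Q x₀|² + |σ₀/2 − R u₀|², π₃ := (h − F x₀ − G u₀)ᵀμ₀ + (V u₀ − v̲₀)ᵀν̲₀ + (v̄₀ − V u₀)ᵀν̄₀, π₄ := −e₀ᵀλ₁. Then every trajectory that is primal feasible for the shifted data (x₁, (v̲'_t), (v̄'_t)) has cost at least d₀ + π₁ + π₂ + π₃ + π₄. -/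

import Mathlib

open Matrix

/-- The squared Euclidean norm `|v|²` of a vector in `ℝ^k`. -/
noncomputable def sqNorm {k : ℕ} (v : Fin k → ℝ) : ℝ := ∑ i, v i ^ 2

variable {n p q r c m : ℕ}

/-- Primal feasibility of a trajectory `((x_t)_{t=0}^T, (u_t)_{t=0}^{T-1})` for the data
`(x̄, (v̲_t), (v̄_t))` of the QP relaxation of the hybrid MPC problem. -/
def PrimalFeasible (T : ℕ)
    (A : Matrix (Fin n) (Fin n) ℝ) (B : Matrix (Fin n) (Fin p) ℝ)
    (F : Matrix (Fin c) (Fin n) ℝ) (G : Matrix (Fin c) (Fin p) ℝ)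
    (V : Matrix (Fin m) (Fin p) ℝ) (h : Fin c → ℝ)
    (xbar : Fin n → ℝ) (vlo vhi : ℕ → Fin m → ℝ)
    (x : ℕ → Fin n → ℝ) (u : ℕ → Fin p → ℝ) : Prop :=
  x 0 = xbar ∧
  (∀ t < T, x (t + 1) = A *ᵥ x t + B *ᵥ u t) ∧
  (∀ t < T, ∀ i, (F *ᵥ x t + G *ᵥ u t) i ≤ h i) ∧
  (∀ t < T, ∀ i, vlo t i ≤ (V *ᵥ u t) i ∧ (V *ᵥ u t) i ≤ vhi t i)

/-- Cost `Σ_{t=0}^T |Q x_t|² + Σ_{t=0}^{T-1} |R u_t|²` of a trajectory. -/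
noncomputable def trajCost (T : ℕ) (Q : Matrix (Fin q) (Fin n) ℝ) (R : Matrix (Fin r) (Fin p) ℝ)
    (x : ℕ → Fin n → ℝ) (u : ℕ → Fin p → ℝ) : ℝ :=
  ∑ t ∈ Finset.range (T + 1), sqNorm (Q *ᵥ x t) + ∑ t ∈ Finset.range T, sqNorm (R *ᵥ u t)

/-- Dual feasibility of a tuple of multipliers
`((λ_t, ρ_t)_{t=0}^T, (μ_t, ν̲_t, ν̄_t, σ_t)_{t=0}^{T-1})`.
Note that dual feasibility does not depend on the bound sequences `(v̲_t), (v̄_t)`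
nor on the initial state `x̄`. -/
def DualFeasible (T : ℕ)
    (A : Matrix (Fin n) (Fin n) ℝ) (B : Matrix (Fin n) (Fin p) ℝ)
    (Q : Matrix (Fin q) (Fin n) ℝ) (R : Matrix (Fin r) (Fin p) ℝ)
    (F : Matrix (Fin c) (Fin n) ℝ) (G : Matrix (Fin c) (Fin p) ℝ)
    (V : Matrix (Fin m) (Fin p) ℝ)
    (lam : ℕ → Fin n → ℝ) (rho : ℕ → Fin q → ℝ)
    (mu : ℕ → Fin c → ℝ) (nlo nhi : ℕ → Fin m → ℝ) (sig : ℕ → Fin r → ℝ) : Prop :=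
  (∀ t < T, Qᵀ *ᵥ rho t + lam t - Aᵀ *ᵥ lam (t + 1) + Fᵀ *ᵥ mu t = 0) ∧
  Qᵀ *ᵥ rho T + lam T = 0 ∧
  (∀ t < T, Rᵀ *ᵥ sig t - Bᵀ *ᵥ lam (t + 1) + Gᵀ *ᵥ mu t + Vᵀ *ᵥ (nhi t - nlo t) = 0) ∧
  (∀ t < T, ∀ i, 0 ≤ mu t i) ∧ (∀ t < T, ∀ i, 0 ≤ nlo t i) ∧ (∀ t < T, ∀ i, 0 ≤ nhi t i)

/-- The dual objective
`d := −Σ_{t=0}^T |ρ_t/2|² − Σ_{t=0}^{T−1}(|σ_t/2|² + hᵀμ_t + v̄_tᵀν̄_t − v̲_tᵀν̲_t) − x̄ᵀλ_0`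
for the data `(x̄, (v̲_t), (v̄_t))`. -/
noncomputable def dualObj (T : ℕ) (h : Fin c → ℝ) (xbar : Fin n → ℝ) (vlo vhi : ℕ → Fin m → ℝ)
    (lam : ℕ → Fin n → ℝ) (rho : ℕ → Fin q → ℝ)
    (mu : ℕ → Fin c → ℝ) (nlo nhi : ℕ → Fin m → ℝ) (sig : ℕ → Fin r → ℝ) : ℝ :=
  -(∑ t ∈ Finset.range (T + 1), sqNorm (fun i => rho t i / 2))
    - ∑ t ∈ Finset.range T,
        (sqNorm (fun i => sig t i / 2) + h ⬝ᵥ mu t + vhi t ⬝ᵥ nhi t - vlo t ⬝ᵥ nlo t)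
    - xbar ⬝ᵥ lam 0

/-- Shift of a `{0,…,T}`-indexed family of multipliers (the `λ_t` or `ρ_t`):
`w'_t := w_{t+1}` for `t = 0,…,T−1` and `w'_T := 0`. -/
noncomputable def shiftT (T : ℕ) {k : ℕ} (w : ℕ → Fin k → ℝ) : ℕ → Fin k → ℝ :=
  fun t => if t < T then w (t + 1) else 0

/-- Shift of a `{0,…,T−1}`-indexed family (the `μ_t, ν̲_t, ν̄_t, σ_t` or the lower
bounds `v̲_t`): `w'_t := w_{t+1}` for `t = 0,…,T−2` and `w'_{T−1} := 0`. -/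
noncomputable def shiftS (T : ℕ) {k : ℕ} (w : ℕ → Fin k → ℝ) : ℕ → Fin k → ℝ :=
  fun t => if t + 1 < T then w (t + 1) else 0

/-- Shift of the upper bounds `v̄_t`: `v̄'_t := v̄_{t+1}` for `t = 0,…,T−2` and
`v̄'_{T−1} := 1` (the all-ones vector). -/
noncomputable def shiftHi (T : ℕ) {k : ℕ} (w : ℕ → Fin k → ℝ) : ℕ → Fin k → ℝ :=
  fun t => if t + 1 < T then w (t + 1) else fun _ => 1


/-- Auxiliary: transpose a matrix across a dot product. -/
lemma transpose_dot {k l : ℕ} (M : Matrix (Fin l) (Fin k) ℝ) (a : Fin l → ℝ) (b : Fin k → ℝ) :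
    Mᵀ *ᵥ a ⬝ᵥ b = a ⬝ᵥ (M *ᵥ b) := by
  rw [mulVec_transpose, ← dotProduct_mulVec]

/-- Auxiliary: expansion of `|a/2 - b|²`. -/
lemma sqNorm_half_sub {k : ℕ} (a b : Fin k → ℝ) :
    sqNorm (fun i => a i / 2 - b i) = sqNorm (fun i => a i / 2) - a ⬝ᵥ b + sqNorm b := by
  unfold sqNorm dotProduct
  rw [← Finset.sum_sub_distrib, ← Finset.sum_add_distrib]
  exact Finset.sum_congr rfl fun i _ => by ring

/-- Auxiliary: the basic quadratic lower bound `a·b - |a/2|² ≤ |b|²`. -/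
lemma dot_le_sqNorm {k : ℕ} (a b : Fin k → ℝ) :
    a ⬝ᵥ b - sqNorm (fun i => a i / 2) ≤ sqNorm b := by
  have h0 : 0 ≤ sqNorm (fun i => a i / 2 - b i) :=
    Finset.sum_nonneg fun i _ => sq_nonneg _
  rw [sqNorm_half_sub] at h0
  linarith

lemma dot_nonpos {k : ℕ} {a b : Fin k → ℝ} (ha : ∀ i, 0 ≤ a i) (hb : ∀ i, b i ≤ 0) :
    a ⬝ᵥ b ≤ 0 := by
  have : ∀ i ∈ Finset.univ, a i * b i ≤ 0 :=
    fun i _ => mul_nonpos_iff.mpr (Or.inl ⟨ha i, hb i⟩)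
  exact Finset.sum_nonpos this

/-- Weak duality for the QP. -/
lemma weak_duality {n p q r c m : ℕ} (T : ℕ)
    (A : Matrix (Fin n) (Fin n) ℝ) (B : Matrix (Fin n) (Fin p) ℝ)
    (Q : Matrix (Fin q) (Fin n) ℝ) (R : Matrix (Fin r) (Fin p) ℝ)
    (F : Matrix (Fin c) (Fin n) ℝ) (G : Matrix (Fin c) (Fin p) ℝ)
    (V : Matrix (Fin m) (Fin p) ℝ) (h : Fin c → ℝ)
    (xbar : Fin n → ℝ) (vlo vhi : ℕ → Fin m → ℝ)
    (lam : ℕ → Fin n → ℝ) (rho : ℕ → Fin q → ℝ)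
    (mu : ℕ → Fin c → ℝ) (nlo nhi : ℕ → Fin m → ℝ) (sig : ℕ → Fin r → ℝ)
    (x : ℕ → Fin n → ℝ) (u : ℕ → Fin p → ℝ)
    (hd : DualFeasible T A B Q R F G V lam rho mu nlo nhi sig)
    (hp : PrimalFeasible T A B F G V h xbar vlo vhi x u) :
    dualObj T h xbar vlo vhi lam rho mu nlo nhi sig ≤ trajCost T Q R x u := by
  obtain ⟨hx0, hdyn, hcon, hbox⟩ := hp
  obtain ⟨hstat, hstatT, hctrl, hmu, hnlo, hnhi⟩ := hd
  -- nonpositivity of the complementary-slackness terms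
  have hslack : ∀ t < T,
      mu t ⬝ᵥ (F *ᵥ x t + G *ᵥ u t - h) + nlo t ⬝ᵥ (vlo t - V *ᵥ u t)
        + nhi t ⬝ᵥ (V *ᵥ u t - vhi t) ≤ 0 := by
    intro t ht
    have h1 : mu t ⬝ᵥ (F *ᵥ x t + G *ᵥ u t - h) ≤ 0 :=
      dot_nonpos (hmu t ht) fun i => by
        have := hcon t ht i; simp only [Pi.sub_apply]; linarith
    have h2 : nlo t ⬝ᵥ (vlo t - V *ᵥ u t) ≤ 0 :=
      dot_nonpos (hnlo t ht) fun i => by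
        have := (hbox t ht i).1; simp only [Pi.sub_apply]; linarith
    have h3 : nhi t ⬝ᵥ (V *ᵥ u t - vhi t) ≤ 0 :=
      dot_nonpos (hnhi t ht) fun i => by
        have := (hbox t ht i).2; simp only [Pi.sub_apply]; linarith
    linarith
  -- per-step key identity
  have key : ∀ t < T,
      rho t ⬝ᵥ (Q *ᵥ x t) + sig t ⬝ᵥ (R *ᵥ u t)
        + (mu t ⬝ᵥ (F *ᵥ x t + G *ᵥ u t - h) + nlo t ⬝ᵥ (vlo t - V *ᵥ u t)
            + nhi t ⬝ᵥ (V *ᵥ u t - vhi t))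
      = (lam (t + 1) ⬝ᵥ x (t + 1) - lam t ⬝ᵥ x t)
          - (h ⬝ᵥ mu t + vhi t ⬝ᵥ nhi t - vlo t ⬝ᵥ nlo t) := by
    intro t ht
    have e1 := congrArg (fun v => v ⬝ᵥ x t) (hstat t ht)
    have e2 := congrArg (fun v => v ⬝ᵥ u t) (hctrl t ht)
    simp only [add_dotProduct, sub_dotProduct, zero_dotProduct, transpose_dot] at e1 e2
    have e3 : lam (t + 1) ⬝ᵥ x (t + 1)
        = lam (t + 1) ⬝ᵥ (A *ᵥ x t) + lam (t + 1) ⬝ᵥ (B *ᵥ u t) := by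
      rw [hdyn t ht, dotProduct_add]
    simp only [dotProduct_add, dotProduct_sub] at e1 e2 ⊢
    have c1 : h ⬝ᵥ mu t = mu t ⬝ᵥ h := dotProduct_comm _ _
    have c2 : vhi t ⬝ᵥ nhi t = nhi t ⬝ᵥ vhi t := dotProduct_comm _ _
    have c3 : vlo t ⬝ᵥ nlo t = nlo t ⬝ᵥ vlo t := dotProduct_comm _ _
    linarith [e1, e2, e3, c1, c2, c3]
  -- terminal identity
  have eT : rho T ⬝ᵥ (Q *ᵥ x T) = -(lam T ⬝ᵥ x T) := by
    have e := congrArg (fun v => v ⬝ᵥ x T) hstatT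
    simp only [add_dotProduct, zero_dotProduct, transpose_dot] at e
    linarith
  -- summed key identity
  have hA : ∑ t ∈ Finset.range T, rho t ⬝ᵥ (Q *ᵥ x t)
      + ∑ t ∈ Finset.range T, sig t ⬝ᵥ (R *ᵥ u t)
      + ∑ t ∈ Finset.range T,
          (mu t ⬝ᵥ (F *ᵥ x t + G *ᵥ u t - h) + nlo t ⬝ᵥ (vlo t - V *ᵥ u t)
            + nhi t ⬝ᵥ (V *ᵥ u t - vhi t))
      = (lam T ⬝ᵥ x T - lam 0 ⬝ᵥ x 0)
          - ∑ t ∈ Finset.range T, (h ⬝ᵥ mu t + vhi t ⬝ᵥ nhi t - vlo t ⬝ᵥ nlo t) := by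
    rw [← Finset.sum_add_distrib, ← Finset.sum_add_distrib,
      ← Finset.sum_range_sub (fun t => lam t ⬝ᵥ x t) T, ← Finset.sum_sub_distrib]
    refine Finset.sum_congr rfl fun t ht => ?_
    have := key t (Finset.mem_range.mp ht)
    linarith
  have f1 : ∑ t ∈ Finset.range (T + 1),
        (rho t ⬝ᵥ (Q *ᵥ x t) - sqNorm (fun i => rho t i / 2))
      ≤ ∑ t ∈ Finset.range (T + 1), sqNorm (Q *ᵥ x t) :=
    Finset.sum_le_sum fun t _ => dot_le_sqNorm _ _
  have f2 : ∑ t ∈ Finset.range T,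
        (sig t ⬝ᵥ (R *ᵥ u t) - sqNorm (fun i => sig t i / 2))
      ≤ ∑ t ∈ Finset.range T, sqNorm (R *ᵥ u t) :=
    Finset.sum_le_sum fun t _ => dot_le_sqNorm _ _
  have f3 : ∑ t ∈ Finset.range T,
        (mu t ⬝ᵥ (F *ᵥ x t + G *ᵥ u t - h) + nlo t ⬝ᵥ (vlo t - V *ᵥ u t)
          + nhi t ⬝ᵥ (V *ᵥ u t - vhi t)) ≤ 0 :=
    Finset.sum_nonpos fun t ht => hslack t (Finset.mem_range.mp ht)
  have g1 : ∑ t ∈ Finset.range (T + 1),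
        (rho t ⬝ᵥ (Q *ᵥ x t) - sqNorm (fun i => rho t i / 2))
      = ∑ t ∈ Finset.range (T + 1), rho t ⬝ᵥ (Q *ᵥ x t)
        - ∑ t ∈ Finset.range (T + 1), sqNorm (fun i => rho t i / 2) :=
    Finset.sum_sub_distrib _ _
  have g2 : ∑ t ∈ Finset.range T,
        (sig t ⬝ᵥ (R *ᵥ u t) - sqNorm (fun i => sig t i / 2))
      = ∑ t ∈ Finset.range T, sig t ⬝ᵥ (R *ᵥ u t)
        - ∑ t ∈ Finset.range T, sqNorm (fun i => sig t i / 2) :=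
    Finset.sum_sub_distrib _ _
  have g3 : ∑ t ∈ Finset.range (T + 1), rho t ⬝ᵥ (Q *ᵥ x t)
      = ∑ t ∈ Finset.range T, rho t ⬝ᵥ (Q *ᵥ x t) + rho T ⬝ᵥ (Q *ᵥ x T) :=
    Finset.sum_range_succ _ T
  have g6 : ∑ t ∈ Finset.range T,
        (sqNorm (fun i => sig t i / 2) + h ⬝ᵥ mu t + vhi t ⬝ᵥ nhi t - vlo t ⬝ᵥ nlo t)
      = ∑ t ∈ Finset.range T, sqNorm (fun i => sig t i / 2)
        + ∑ t ∈ Finset.range T, (h ⬝ᵥ mu t + vhi t ⬝ᵥ nhi t - vlo t ⬝ᵥ nlo t) := by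
    rw [← Finset.sum_add_distrib]
    exact Finset.sum_congr rfl fun t _ => by ring
  have g7 : xbar ⬝ᵥ lam 0 = lam 0 ⬝ᵥ x 0 := by rw [hx0, dotProduct_comm]
  unfold dualObj trajCost
  rw [g6, g7]
  linarith [f1, f2, f3, g1, g2, g3, eT, hA]

/-- **Theorem 1 (propagation of subproblem lower bounds):** every trajectory that is
primal feasible for the shifted data `(x₁, (v̲'_t), (v̄'_t))`, with
`x₁ = A x₀ + B u₀ + e₀`, has cost at least `d₀ + π₁ + π₂ + π₃ + π₄`. -/
theorem propagated_lower_bound (n p q r c m T : ℕ) (hT : 1 ≤ T)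
    (A : Matrix (Fin n) (Fin n) ℝ) (B : Matrix (Fin n) (Fin p) ℝ)
    (Q : Matrix (Fin q) (Fin n) ℝ) (R : Matrix (Fin r) (Fin p) ℝ)
    (F : Matrix (Fin c) (Fin n) ℝ) (G : Matrix (Fin c) (Fin p) ℝ)
    (V : Matrix (Fin m) (Fin p) ℝ) (h : Fin c → ℝ)
    (x0 : Fin n → ℝ) (u0 : Fin p → ℝ) (e0 : Fin n → ℝ)
    (vlo vhi : ℕ → Fin m → ℝ)
    (lam : ℕ → Fin n → ℝ) (rho : ℕ → Fin q → ℝ)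
    (mu : ℕ → Fin c → ℝ) (nlo nhi : ℕ → Fin m → ℝ) (sig : ℕ → Fin r → ℝ)
    (hdual : DualFeasible T A B Q R F G V lam rho mu nlo nhi sig)
    (x : ℕ → Fin n → ℝ) (u : ℕ → Fin p → ℝ)
    (hprimal : PrimalFeasible T A B F G V h (A *ᵥ x0 + B *ᵥ u0 + e0)
      (shiftS T vlo) (shiftHi T vhi) x u) :
    dualObj T h x0 vlo vhi lam rho mu nlo nhi sig
        + (-(sqNorm (Q *ᵥ x0) + sqNorm (R *ᵥ u0)))
        + (sqNorm (fun i => rho 0 i / 2 - (Q *ᵥ x0) i) +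
          sqNorm (fun i => sig 0 i / 2 - (R *ᵥ u0) i))
        + ((h - F *ᵥ x0 - G *ᵥ u0) ⬝ᵥ mu 0 + (V *ᵥ u0 - vlo 0) ⬝ᵥ nlo 0 +
          (vhi 0 - V *ᵥ u0) ⬝ᵥ nhi 0)
        + (-(e0 ⬝ᵥ lam 1))
      ≤ trajCost T Q R x u := by
  obtain ⟨T', rfl⟩ : ∃ T', T = T' + 1 := ⟨T - 1, by omega⟩
  obtain ⟨hstat, hstatT, hctrl, hmu, hnlo, hnhi⟩ := hdual
  -- dual feasibility of the shifted multipliers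
  have hd' : DualFeasible (T' + 1) A B Q R F G V (shiftT (T' + 1) lam) (shiftT (T' + 1) rho)
      (shiftS (T' + 1) mu) (shiftS (T' + 1) nlo) (shiftS (T' + 1) nhi) (shiftS (T' + 1) sig) := by
    refine ⟨?_, ?_, ?_, ?_, ?_, ?_⟩
    · intro t ht
      by_cases h2 : t + 1 < T' + 1
      · simp only [shiftT, shiftS, if_pos ht, if_pos h2]
        exact hstat (t + 1) h2
      · have hTt : t + 1 = T' + 1 := by omega
        simp only [shiftT, shiftS, if_pos ht, if_neg h2]
        rw [hTt]
        simpa [Matrix.mulVec_zero] using hstatT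
    · simp [shiftT, Matrix.mulVec_zero]
    · intro t ht
      by_cases h2 : t + 1 < T' + 1
      · simp only [shiftT, shiftS, if_pos h2]
        exact hctrl (t + 1) h2
      · have h3 : ¬ t < T' := by omega
        simp [shiftT, shiftS, h3, Matrix.mulVec_zero]
    · intro t ht i
      by_cases h2 : t + 1 < T' + 1
      · simp only [shiftS, if_pos h2]; exact hmu (t + 1) h2 i
      · have h3 : ¬ t < T' := by omega
        simp [shiftS, h3]
    · intro t ht i
      by_cases h2 : t + 1 < T' + 1
      · simp only [shiftS, if_pos h2]; exact hnlo (t + 1) h2 i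
      · have h3 : ¬ t < T' := by omega
        simp [shiftS, h3]
    · intro t ht i
      by_cases h2 : t + 1 < T' + 1
      · simp only [shiftS, if_pos h2]; exact hnhi (t + 1) h2 i
      · have h3 : ¬ t < T' := by omega
        simp [shiftS, h3]
  have hwd := weak_duality (T' + 1) A B Q R F G V h (A *ᵥ x0 + B *ᵥ u0 + e0)
    (shiftS (T' + 1) vlo) (shiftHi (T' + 1) vhi) (shiftT (T' + 1) lam) (shiftT (T' + 1) rho)
    (shiftS (T' + 1) mu) (shiftS (T' + 1) nlo) (shiftS (T' + 1) nhi) (shiftS (T' + 1) sig)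
    x u hd' hprimal
  refine le_trans (le_of_eq ?_) hwd
  -- the shifted dual objective equals the propagated bound
  have hrho : ∑ t ∈ Finset.range (T' + 1 + 1), sqNorm (fun i => shiftT (T' + 1) rho t i / 2)
      = ∑ t ∈ Finset.range (T' + 1 + 1), sqNorm (fun i => rho t i / 2)
        - sqNorm (fun i => rho 0 i / 2) := by
    rw [Finset.sum_range_succ,
      Finset.sum_range_succ' (fun t => sqNorm (fun i => rho t i / 2)) (T' + 1)]
    have h1 : sqNorm (fun i => shiftT (T' + 1) rho (T' + 1) i / 2) = 0 := by
      simp [shiftT, sqNorm]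
    rw [Finset.sum_congr rfl (fun t ht => ?_), h1]
    · ring
    · show sqNorm (fun i => shiftT (T' + 1) rho t i / 2) = sqNorm (fun i => rho (t + 1) i / 2)
      have : t < T' + 1 := Finset.mem_range.mp ht
      simp [shiftT, this]
  have hg : ∑ t ∈ Finset.range (T' + 1),
        (sqNorm (fun i => shiftS (T' + 1) sig t i / 2) + h ⬝ᵥ shiftS (T' + 1) mu t
          + shiftHi (T' + 1) vhi t ⬝ᵥ shiftS (T' + 1) nhi t
          - shiftS (T' + 1) vlo t ⬝ᵥ shiftS (T' + 1) nlo t)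
      = ∑ t ∈ Finset.range (T' + 1),
          (sqNorm (fun i => sig t i / 2) + h ⬝ᵥ mu t + vhi t ⬝ᵥ nhi t - vlo t ⬝ᵥ nlo t)
        - (sqNorm (fun i => sig 0 i / 2) + h ⬝ᵥ mu 0 + vhi 0 ⬝ᵥ nhi 0 - vlo 0 ⬝ᵥ nlo 0) := by
    rw [Finset.sum_range_succ,
      Finset.sum_range_succ'
        (fun t => sqNorm (fun i => sig t i / 2) + h ⬝ᵥ mu t + vhi t ⬝ᵥ nhi t - vlo t ⬝ᵥ nlo t) T']
    have h1 : sqNorm (fun i => shiftS (T' + 1) sig T' i / 2) + h ⬝ᵥ shiftS (T' + 1) mu T'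
        + shiftHi (T' + 1) vhi T' ⬝ᵥ shiftS (T' + 1) nhi T'
        - shiftS (T' + 1) vlo T' ⬝ᵥ shiftS (T' + 1) nlo T' = 0 := by
      simp [shiftS, shiftHi, sqNorm]
    rw [Finset.sum_congr rfl (fun t ht => ?_), h1]
    · ring
    · have h2 : t + 1 < T' + 1 := by
        have := Finset.mem_range.mp ht; omega
      simp [shiftS, shiftHi, h2]
  have hx1 : (A *ᵥ x0 + B *ᵥ u0 + e0) ⬝ᵥ shiftT (T' + 1) lam 0
      = (A *ᵥ x0) ⬝ᵥ lam 1 + (B *ᵥ u0) ⬝ᵥ lam 1 + e0 ⬝ᵥ lam 1 := by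
    have h0 : shiftT (T' + 1) lam 0 = lam 1 := by simp [shiftT]
    rw [h0, add_dotProduct, add_dotProduct]
  have s1 := congrArg (fun v => v ⬝ᵥ x0) (hstat 0 (Nat.succ_pos T'))
  have s2 := congrArg (fun v => v ⬝ᵥ u0) (hctrl 0 (Nat.succ_pos T'))
  simp only [add_dotProduct, sub_dotProduct, zero_dotProduct, transpose_dot] at s1 s2
  have c1 : x0 ⬝ᵥ lam 0 = lam 0 ⬝ᵥ x0 := dotProduct_comm _ _
  have c2 : (A *ᵥ x0) ⬝ᵥ lam 1 = lam 1 ⬝ᵥ (A *ᵥ x0) := dotProduct_comm _ _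
  have c3 : (B *ᵥ u0) ⬝ᵥ lam 1 = lam 1 ⬝ᵥ (B *ᵥ u0) := dotProduct_comm _ _
  have c4 : (F *ᵥ x0) ⬝ᵥ mu 0 = mu 0 ⬝ᵥ (F *ᵥ x0) := dotProduct_comm _ _
  have c5 : (G *ᵥ u0) ⬝ᵥ mu 0 = mu 0 ⬝ᵥ (G *ᵥ u0) := dotProduct_comm _ _
  have c6 : (V *ᵥ u0) ⬝ᵥ nlo 0 = nlo 0 ⬝ᵥ (V *ᵥ u0) := dotProduct_comm _ _
  have c7 : (V *ᵥ u0) ⬝ᵥ nhi 0 = nhi 0 ⬝ᵥ (V *ᵥ u0) := dotProduct_comm _ _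
  unfold dualObj
  rw [hrho, hg, hx1, sqNorm_half_sub (rho 0) (Q *ᵥ x0), sqNorm_half_sub (sig 0) (R *ᵥ u0)]
  simp only [sub_dotProduct, dotProduct_sub] at s2 ⊢
  linarith [s1, s2, c1, c2, c3, c4, c5, c6, c7]
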